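/- (Differentiability of the von Neumann divergence in its first argument.) Let X and Y be n×n real symmetric positive definite matrices and H an n×n real symmetric matrix. Then the function φ(t) = D_vN(X + tH ‖ Y) = Tr((X+tH) log(X+tH) − (X+tH) log Y − (X+tH) + Y), defined for t in a neighborhood of 0 where X + tH is positive definite, is differentiable at t = 0 with φ'(0) = Tr(H · (log X − log Y)). -/

import Mathlib

open Matrix

/-- Matrix logarithm of a real symmetric matrix, via the spectral decomposition:
apply the real logarithm to the eigenvalues. (Junk value `0` if not symmetric.) -/
noncomputable def matLog {n : Type*} [Fintype n] [DecidableEq n]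
    (A : Matrix n n ℝ) : Matrix n n ℝ :=
  if h : A.IsHermitian then h.cfc Real.log else 0

/-- The von Neumann divergence `D_vN(X‖Y) = Tr(X log X − X log Y − X + Y)`. -/
noncomputable def DvN {n : Type*} [Fintype n] [DecidableEq n]
    (X Y : Matrix n n ℝ) : ℝ :=
  (X * matLog X - X * matLog Y - X + Y).trace

/-- The symmetric (Jeffery) von Neumann divergence
`J_vN(X:Y) = (1/2)(D_vN(X‖Y) + D_vN(Y‖X))`. -/
noncomputable def JvN {n : Type*} [Fintype n] [DecidableEq n]
    (X Y : Matrix n n ℝ) : ℝ :=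
  (1 / 2) * (DvN X Y + DvN Y X)

/-!
Write `f x = x log x - x`, so that `D_vN(B‖Y) = Tr f(B) - Tr(B log Y) + Tr Y`, which is affine
in `B` apart from `Tr f(B)`. If `A = ∑ λᵢ uᵢuᵢᵀ` and `B = ∑ μⱼ vⱼvⱼᵀ`, then with
`wᵢⱼ = ⟨uᵢ, vⱼ⟩² ≥ 0` every trace `Tr(p(A) q(B))` equals `∑ wᵢⱼ p(λᵢ) q(μⱼ)`, hence
`Tr f(B) - Tr f(A) - Tr((B - A) f'(A)) = ∑ wᵢⱼ (f(μⱼ) - f(λᵢ) - (μⱼ - λᵢ) f'(λᵢ))` and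
`Tr((B - A)²) = ∑ wᵢⱼ (μⱼ - λᵢ)²`. Since `|f(μ) - f(λ) - (μ - λ) f'(λ)| ≤ (2/λ) (μ - λ)²`,
taking `A = X`, `B = X + tH` shows that `D_vN(X + tH‖Y)` differs from its linearization at `t = 0`
by `O(t²)`.
-/

open Real Filter Topology Asymptotics

theorem hasDerivAt_of_abs_sub_sub_le_sq {f : ℝ → ℝ} {f' x C : ℝ}
    (h : ∀ t, |f t - f x - (t - x) * f'| ≤ C * (t - x) ^ 2) : HasDerivAt f f' x := by
  refine hasDerivAt_iff_isLittleO.mpr ((IsBigO.of_bound C ?_).trans_isLittleO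
    (isLittleO_pow_sub_sub x one_lt_two))
  refine Eventually.of_forall fun t => ?_
  simpa only [smul_eq_mul, mul_comm, norm_eq_abs, sq_abs, norm_pow] using h t

/-- For `y ≤ 0` the bound holds through `Real.log y = Real.log |y|`, so it applies to the
eigenvalues of `X + tH` without knowing that they are positive. -/
theorem abs_mul_log_sub_sub_le {x : ℝ} (hx : 0 < x) (y : ℝ) :
    |(y * log y - y) - (x * log x - x) - (y - x) * log x| ≤ 2 / x * (y - x) ^ 2 := by
  suffices h : |x * ((y * log y - y) - (x * log x - x) - (y - x) * log x)| ≤ 2 * (y - x) ^ 2 by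
    rw [abs_mul, abs_of_pos hx] at h
    rw [div_mul_eq_mul_div, le_div_iff₀ hx]
    linarith
  rw [abs_le]
  rcases lt_trichotomy y 0 with hy | rfl | hy
  · set s := -y
    have hs : 0 < s := neg_pos.mpr hy
    have hup : s * (log x - log s) ≤ x - s := by
      have := mul_le_mul_of_nonneg_left (log_le_sub_one_of_pos (div_pos hx hs)) hs.le
      rw [log_div hx.ne' hs.ne'] at this
      calc _ ≤ _ := this
        _ = _ := by field_simp
    have hlow : x * s - s ^ 2 ≤ x * (s * (log x - log s)) := by
      have := mul_le_mul_of_nonneg_left (one_sub_inv_le_log_of_pos (div_pos hx hs))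
        (mul_pos hx hs).le
      rw [log_div hx.ne' hs.ne', inv_div] at this
      calc x * s - s ^ 2 = x * s * (1 - s / x) := by field_simp
        _ ≤ _ := this
        _ = _ := by ring
    have hlogy : log y = log s := (log_neg_eq_log y).symm
    rw [hlogy, show y = -s by simp [s]]
    constructor <;> nlinarith
  · simp only [log_zero]
    constructor <;> nlinarith
  · have hup : x * (y * (log y - log x)) ≤ y * (y - x) := by
      have := mul_le_mul_of_nonneg_left (log_le_sub_one_of_pos (div_pos hy hx)) (mul_pos hx hy).le
      rw [log_div hy.ne' hx.ne'] at this
      calc _ = x * y * (log y - log x) := by ring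
        _ ≤ _ := this
        _ = _ := by field_simp
    have hlow : y - x ≤ y * (log y - log x) := by
      have := mul_le_mul_of_nonneg_left (one_sub_inv_le_log_of_pos (div_pos hy hx)) hy.le
      rw [log_div hy.ne' hx.ne', inv_div, mul_sub, mul_one, mul_div_cancel₀ _ hy.ne'] at this
      exact this
    constructor <;> nlinarith

namespace Matrix.IsHermitian

variable {n : Type*} [Fintype n] [DecidableEq n] {A B : Matrix n n ℝ}

theorem cfc_mul_cfc (hA : A.IsHermitian) (f g : ℝ → ℝ) :
    hA.cfc f * hA.cfc g = hA.cfc (fun x => f x * g x) := by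
  simp only [← hA.cfc_eq]
  exact (cfc_mul f g A (A.finite_spectrum.continuousOn _) (A.finite_spectrum.continuousOn _)).symm

theorem cfc_id' (hA : A.IsHermitian) : hA.cfc (fun x => x) = A := by
  rw [← hA.cfc_eq]; exact _root_.cfc_id' ℝ A

theorem cfc_one (hA : A.IsHermitian) : hA.cfc 1 = 1 := by
  rw [← hA.cfc_eq]; exact _root_.cfc_one ℝ A

theorem cfc_sub (hA : A.IsHermitian) (f g : ℝ → ℝ) :
    hA.cfc (fun x => f x - g x) = hA.cfc f - hA.cfc g := by
  simp only [← hA.cfc_eq]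
  exact _root_.cfc_sub f g A (A.finite_spectrum.continuousOn _) (A.finite_spectrum.continuousOn _)

theorem matLog_eq (hA : A.IsHermitian) : matLog A = hA.cfc log :=
  dif_pos hA

theorem cfc_mul_log_sub_self (hA : A.IsHermitian) :
    hA.cfc (fun x => x * log x - x) = A * matLog A - A := by
  rw [hA.cfc_sub, ← hA.cfc_mul_cfc, hA.cfc_id', hA.matLog_eq]

/-- `eigenOverlap hA hB i j = ⟨uᵢ, vⱼ⟩²` for the orthonormal eigenbases `u` of `A`, `v` of `B`. -/
noncomputable def eigenOverlap (hA : A.IsHermitian) (hB : B.IsHermitian) (i j : n) : ℝ :=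
  ((star (hA.eigenvectorUnitary : Matrix n n ℝ) * hB.eigenvectorUnitary) i j) ^ 2

theorem trace_cfc_mul_cfc (hA : A.IsHermitian) (hB : B.IsHermitian) (f g : ℝ → ℝ) :
    (hA.cfc f * hB.cfc g).trace =
      ∑ i, ∑ j, eigenOverlap hA hB i j * f (hA.eigenvalues i) * g (hB.eigenvalues j) := by
  set U : Matrix n n ℝ := (hA.eigenvectorUnitary : Matrix n n ℝ)
  set V : Matrix n n ℝ := (hB.eigenvectorUnitary : Matrix n n ℝ)
  have hVU : star V * U = (star U * V)ᵀ := by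
    simp [star_eq_conjTranspose, conjTranspose_eq_transpose_of_trivial, transpose_mul]
  have hcycle : (hA.cfc f * hB.cfc g).trace =
      (diagonal (f ∘ hA.eigenvalues) * (star U * V) * diagonal (g ∘ hB.eigenvalues) *
        (star U * V)ᵀ).trace := by
    simp only [IsHermitian.cfc, Unitary.conjStarAlgAut_apply, RCLike.ofReal_real_eq_id,
      Function.id_comp, ← hVU, Matrix.mul_assoc]
    rw [trace_mul_comm]
    simp only [Matrix.mul_assoc, U, V]
  rw [hcycle, Matrix.trace]
  refine Finset.sum_congr rfl fun i _ => ?_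
  rw [diag_apply, mul_apply]
  refine Finset.sum_congr rfl fun j _ => ?_
  simp only [mul_diagonal, diagonal_mul, transpose_apply, eigenOverlap, Function.comp_apply]
  ring

theorem eigenOverlap_nonneg (hA : A.IsHermitian) (hB : B.IsHermitian) (i j : n) :
    0 ≤ eigenOverlap hA hB i j :=
  sq_nonneg _

theorem trace_cfc_sub_sub_eq_sum (hA : A.IsHermitian) (hB : B.IsHermitian) (f g : ℝ → ℝ) :
    (hB.cfc f).trace - (hA.cfc f).trace - ((B - A) * hA.cfc g).trace =
      ∑ i, ∑ j, eigenOverlap hA hB i j * (f (hB.eigenvalues j) - f (hA.eigenvalues i) -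
        (hB.eigenvalues j - hA.eigenvalues i) * g (hA.eigenvalues i)) := by
  have hfB : (hB.cfc f).trace = (hA.cfc 1 * hB.cfc f).trace := by rw [hA.cfc_one, one_mul]
  have hfA : (hA.cfc f).trace = (hA.cfc f * hB.cfc 1).trace := by rw [hB.cfc_one, mul_one]
  have hlin : ((B - A) * hA.cfc g).trace =
      (hA.cfc g * hB.cfc (fun x => x)).trace - (hA.cfc (fun x => x * g x) * hB.cfc 1).trace := by
    rw [hB.cfc_id', hB.cfc_one, mul_one, ← hA.cfc_mul_cfc (fun x => x) g, hA.cfc_id', sub_mul,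
      trace_sub, trace_mul_comm B]
  rw [hfB, hfA, hlin]
  simp only [trace_cfc_mul_cfc, ← Finset.sum_sub_distrib, Pi.one_apply]
  refine Finset.sum_congr rfl fun i _ => Finset.sum_congr rfl fun j _ => ?_
  ring

theorem trace_sub_mul_sub_eq_sum (hA : A.IsHermitian) (hB : B.IsHermitian) :
    ((B - A) * (B - A)).trace =
      ∑ i, ∑ j, eigenOverlap hA hB i j * (hB.eigenvalues j - hA.eigenvalues i) ^ 2 := by
  have hBB : (B * B).trace = (hA.cfc 1 * hB.cfc (fun x => x * x)).trace := by
    rw [hA.cfc_one, one_mul, ← hB.cfc_mul_cfc (fun x => x) (fun x => x), hB.cfc_id']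
  have hAA : (A * A).trace = (hA.cfc (fun x => x * x) * hB.cfc 1).trace := by
    rw [hB.cfc_one, mul_one, ← hA.cfc_mul_cfc (fun x => x) (fun x => x), hA.cfc_id']
  have hAB : (A * B).trace = (hA.cfc (fun x => x) * hB.cfc (fun x => x)).trace := by
    rw [hA.cfc_id', hB.cfc_id']
  rw [sub_mul, mul_sub, mul_sub, trace_sub, trace_sub, trace_sub, trace_mul_comm B A, hBB, hAA,
    hAB]
  simp only [trace_cfc_mul_cfc, ← Finset.sum_sub_distrib, Pi.one_apply]
  refine Finset.sum_congr rfl fun i _ => Finset.sum_congr rfl fun j _ => ?_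
  ring

theorem abs_trace_cfc_sub_sub_le (hA : A.IsHermitian) (hB : B.IsHermitian) {f g : ℝ → ℝ} {K : ℝ}
    (h : ∀ i j, |f (hB.eigenvalues j) - f (hA.eigenvalues i) -
      (hB.eigenvalues j - hA.eigenvalues i) * g (hA.eigenvalues i)| ≤
        K * (hB.eigenvalues j - hA.eigenvalues i) ^ 2) :
    |(hB.cfc f).trace - (hA.cfc f).trace - ((B - A) * hA.cfc g).trace| ≤
      K * ((B - A) * (B - A)).trace := by
  rw [trace_cfc_sub_sub_eq_sum, trace_sub_mul_sub_eq_sum hA hB, Finset.mul_sum]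
  refine (Finset.abs_sum_le_sum_abs _ _).trans (Finset.sum_le_sum fun i _ => ?_)
  rw [Finset.mul_sum]
  refine (Finset.abs_sum_le_sum_abs _ _).trans (Finset.sum_le_sum fun j _ => ?_)
  rw [abs_mul, abs_of_nonneg (eigenOverlap_nonneg hA hB i j), mul_left_comm]
  exact mul_le_mul_of_nonneg_left (h i j) (eigenOverlap_nonneg hA hB i j)

end Matrix.IsHermitian

theorem DvN_eq_trace_cfc {n : Type*} [Fintype n] [DecidableEq n] {X : Matrix n n ℝ}
    (hX : X.IsHermitian) (Y : Matrix n n ℝ) :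
    DvN X Y = (hX.cfc fun x => x * log x - x).trace - (X * matLog Y).trace + Y.trace := by
  rw [hX.cfc_mul_log_sub_self, DvN, sub_right_comm _ (X * matLog Y), trace_add, trace_sub]

theorem abs_DvN_add_smul_sub_le {n : Type*} [Fintype n] [DecidableEq n]
    {X H : Matrix n n ℝ} (hX : X.PosDef) (hH : H.IsHermitian) (Y : Matrix n n ℝ) (t : ℝ) :
    |DvN (X + t • H) Y - DvN X Y - t * (H * (matLog X - matLog Y)).trace| ≤
      (∑ i, 2 / hX.1.eigenvalues i) * (H * H).trace * t ^ 2 := by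
  have hXtH : (X + t • H).IsHermitian := hX.1.add (hH.smul (IsSelfAdjoint.all t))
  have hK (i : n) : 2 / hX.1.eigenvalues i ≤ ∑ i, 2 / hX.1.eigenvalues i :=
    Finset.single_le_sum (fun j _ => (div_pos two_pos (hX.eigenvalues_pos j)).le)
      (Finset.mem_univ i)
  have hbound := hX.1.abs_trace_cfc_sub_sub_le hXtH (f := fun x => x * log x - x) (g := log)
    fun i j => (abs_mul_log_sub_sub_le (hX.eigenvalues_pos i) _).trans
      (mul_le_mul_of_nonneg_right (hK i) (sq_nonneg _))
  rw [add_sub_cancel_left, ← hX.1.matLog_eq, smul_mul_smul, trace_smul, smul_eq_mul] at hbound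
  calc _ = |(hXtH.cfc fun x => x * log x - x).trace - (hX.1.cfc fun x => x * log x - x).trace
          - (t • H * matLog X).trace| := by
        simp only [DvN_eq_trace_cfc hXtH, DvN_eq_trace_cfc hX.1, add_mul, mul_sub,
          smul_mul_assoc, trace_add, trace_sub, trace_smul, smul_eq_mul]
        congr 1
        ring
    _ ≤ _ := hbound
    _ = _ := by ring

theorem hasDerivAt_DvN_left_general {n : Type*} [Fintype n] [DecidableEq n]
    (X Y H : Matrix n n ℝ) (hX : X.PosDef) (hH : H.IsHermitian) :
    HasDerivAt (fun t : ℝ => DvN (X + t • H) Y)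
      ((H * (matLog X - matLog Y)).trace) 0 :=
  hasDerivAt_of_abs_sub_sub_le_sq fun t => by
    simpa only [zero_smul, add_zero, sub_zero] using abs_DvN_add_smul_sub_le hX hH Y t

/-- Differentiability of the von Neumann divergence in its first argument:
`t ↦ D_vN(X + tH ‖ Y)` is differentiable at `t = 0` with derivative
`Tr(H (log X − log Y))`. -/
theorem hasDerivAt_DvN_left {n : Type*} [Fintype n] [DecidableEq n]
    (X Y H : Matrix n n ℝ) (hX : X.PosDef) (hY : Y.PosDef) (hH : H.IsHermitian) :
    HasDerivAt (fun t : ℝ => DvN (X + t • H) Y)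
      ((H * (matLog X - matLog Y)).trace) 0 :=
  hasDerivAt_DvN_left_general X Y H hX hH
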